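/- arXiv:1212.3403 — 3 statements merged into one kernel-verified Lean document; each statement's English description precedes it below -/
import Mathlib

section
/- In the layered auxiliary graph H constructed from G (which, for each vertex v_l of G other than the root r, contains D copies v_l^1,…,v_l^D; for each edge e=(v_j,v_l) of G not incident to r, contains the directed edges (v_j^i, v_l^{i+d(e)}) for i=1,…,D−d(e), each of cost c(e); for each edge (r,v_l), contains the edge (r, v_l^{d(e)}) of cost c(e); and for each terminal v_l ∈ S∖{r}, contains an extra terminal vertex v_l together with cost-0 edges (v_l^i, v_l) for i=1,…,D), every minimum-cost directed Steiner tree rooted at r spanning the terminal set S_H contains at most one vertex among the copies v_l^1,…,v_l^D, for each vertex v_l of G. -/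
/-!
Common framework.

A directed graph on a type `α` is given by a finite set of directed edges
`Finset (α × α)`.  A directed Steiner tree (arborescence) rooted at `r`
spanning a terminal set `T` is a finite edge set `R` such that no edge enters
the root, every vertex has in-degree at most one, the tail of every edge is
reachable from `r` inside `R` (hence every vertex of `R` is reachable from
`r` by a unique directed path), and every terminal of `T` is reachable
from `r` in `R`.
-/

/-- `b` is reachable from `a` using the directed edges of `R`. -/
def Reaches {α : Type*} (R : Finset (α × α)) (a b : α) : Prop :=
  Relation.ReflTransGen (fun x y => (x, y) ∈ R) a b

/-- `R` is a directed Steiner tree rooted at `r` spanning the terminal set `T`. -/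
def IsDirSteinerTree {α : Type*} [DecidableEq α] (R : Finset (α × α)) (r : α)
    (T : Finset α) : Prop :=
  (∀ e ∈ R, e.2 ≠ r) ∧
  (∀ v : α, (R.filter fun e => e.2 = v).card ≤ 1) ∧
  (∀ e ∈ R, Reaches R r e.1) ∧
  (∀ t ∈ T, Reaches R r t)

/-- The total cost of the edge set `R` under the edge-cost function `c`. -/
def treeCost {α : Type*} (c : α × α → ℕ) (R : Finset (α × α)) : ℕ :=
  ∑ e ∈ R, c e

/-- `x` is a vertex of the edge set `R` (an endpoint of some edge of `R`). -/
def MemVerts {α : Type*} (R : Finset (α × α)) (x : α) : Prop :=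
  ∃ e ∈ R, e.1 = x ∨ e.2 = x

/-- `R` is a minimum-cost directed Steiner tree rooted at `r` spanning `T`
inside the directed graph with edge set `Edges`, w.r.t. the cost `c`. -/
def IsMinDirSteinerTree {α : Type*} [DecidableEq α] (c : α × α → ℕ)
    (Edges R : Finset (α × α)) (r : α) (T : Finset α) : Prop :=
  R ⊆ Edges ∧ IsDirSteinerTree R r T ∧
    ∀ R' ⊆ Edges, IsDirSteinerTree R' r T → treeCost c R ≤ treeCost c R'

/-- `b` is reachable from `a` in `R` by a directed path of total delay
exactly `k` (delays given by `d`). -/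
def DelayReaches {α : Type*} (R : Finset (α × α)) (d : α × α → ℕ)
    (a b : α) (k : ℕ) : Prop :=
  Relation.ReflTransGen
    (fun p q : α × ℕ => (p.1, q.1) ∈ R ∧ q.2 = p.2 + d (p.1, q.1))
    (a, 0) (b, k)

/-- Vertices of the layered auxiliary graph `H` built from a graph on `V`:
`Sum.inl r` is the root, `Sum.inl v` (for a terminal `v ≠ r`) is the extra
terminal copy of `v`, and `Sum.inr (v, i)` is the layer copy `v^i`
(meaningful for `1 ≤ i ≤ D`). -/
abbrev AuxV (V : Type*) := V ⊕ (V × ℕ)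

/-- The edge set of the layered auxiliary graph `H`:
* for every edge `e = (v_j, v_l) ∈ E` not incident to the root `r` and every
  layer `i` with `1 ≤ i` and `i + d e ≤ D`, a directed edge
  `(v_j^i, v_l^{i+d e})`;
* for every edge `(r, v_l) ∈ E` (with `d e ≤ D`), a directed edge
  `(r, v_l^{d e})`;
* for every terminal `v ∈ S \ {r}` and every `1 ≤ i ≤ D`, a directed edge
  `(v^i, v)` into the extra terminal copy of `v`. -/
def auxEdges {V : Type*} [DecidableEq V] (E : Finset (V × V)) (d : V × V → ℕ)
    (S : Finset V) (r : V) (D : ℕ) : Finset (AuxV V × AuxV V) :=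
  (((E.filter fun e => e.1 ≠ r ∧ e.2 ≠ r) ×ˢ Finset.Icc 1 D).filter
      fun p => p.2 + d p.1 ≤ D).image
    (fun p => (Sum.inr (p.1.1, p.2), Sum.inr (p.1.2, p.2 + d p.1)))
  ∪ (E.filter fun e => e.1 = r ∧ e.2 ≠ r ∧ d e ≤ D).image
      (fun e => (Sum.inl r, Sum.inr (e.2, d e)))
  ∪ ((S.erase r) ×ˢ Finset.Icc 1 D).image
      (fun p => (Sum.inr (p.1, p.2), Sum.inl p.1))

/-- Costs of the edges of the auxiliary graph: an edge between copies of `a`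
and `b` inherits the cost `c (a, b)` of the underlying edge of `G`; the
edges into the extra terminal copies have cost `0`. -/
def auxCost {V : Type*} (c : V × V → ℕ) : AuxV V × AuxV V → ℕ
  | (Sum.inr (a, _), Sum.inr (b, _)) => c (a, b)
  | (Sum.inl a, Sum.inr (b, _)) => c (a, b)
  | _ => 0

/-- The terminal set `S_H` of the auxiliary graph: the root `Sum.inl r`
together with the extra terminal copies `Sum.inl v`, `v ∈ S \ {r}`;
i.e. the image of `S` under `Sum.inl`. -/
def auxTerminals {V : Type*} [DecidableEq V] (S : Finset V) : Finset (AuxV V) :=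
  S.image Sum.inl

/-- The projection of an edge set `R` of the auxiliary graph back to `G`:
the set of all edges `(v_j, v_l)` of `G` some copy of which belongs to `R`. -/
def projTree {V : Type*} [DecidableEq V] (R : Finset (AuxV V × AuxV V)) :
    Finset (V × V) :=
  R.biUnion fun p =>
    match p with
    | (Sum.inr (a, _), Sum.inr (b, _)) => {(a, b)}
    | (Sum.inl a, Sum.inr (b, _)) => {(a, b)}
    | _ => ∅

/-!
If a minimum-cost Steiner tree `R` of `H` contained two copies `v^i` and `v^j` with `i < j`, cut
the edge into `v^j` and hang the subtree below `v^j`, lowered by `j - i` layers, below `v^i`.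
Every vertex of that subtree lies at layer `≥ j` and `v^i` at layer `≥ 1` (delays are positive),
so the lowered edges are still edges of `H`, with unchanged costs; all terminals stay reachable,
and the cut edge had positive cost. Pruning the result to a Steiner tree gives a cheaper one.
-/

namespace Reaches

variable {α : Type*} {R : Finset (α × α)} {r v x : α}

theorem exists_mem_of_ne (h : Reaches R r x) (hx : x ≠ r) : ∃ y, (y, x) ∈ R := by
  obtain h | ⟨y, -, hy⟩ := Relation.ReflTransGen.cases_tail h
  · exact absurd h hx
  · exact ⟨y, hy⟩

/-- Edges into `v` may be dropped as long as `v` itself stays reachable. -/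
theorem map_reroute {β : Type*} {R' : Finset (β × β)} {φ : α → β}
    (hR' : ∀ e ∈ R, e.2 ≠ v → (φ e.1, φ e.2) ∈ R') (hv : Reaches R' (φ r) (φ v))
    (h : Reaches R r x) : Reaches R' (φ r) (φ x) := by
  induction h with
  | refl => exact .refl
  | @tail y z _ hyz ih =>
    by_cases hz : z = v
    · exact hz ▸ hv
    · exact ih.tail (hR' _ hyz hz)

theorem mono {R' : Finset (α × α)} {a b : α} (h : Reaches R a b) (hRR' : R ⊆ R') :
    Reaches R' a b :=
  Relation.ReflTransGen.mono (fun _ _ h => hRR' h) _ _ h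

variable [DecidableEq α]

theorem of_mem_of_reaches_snd
    (hdeg : ∀ v : α, (R.filter fun e => e.2 = v).card ≤ 1) {y : α}
    (hxy : (x, y) ∈ R) (hy : Reaches R v y) (hyv : y ≠ v) : Reaches R v x := by
  obtain ⟨z, hz, hzy⟩ := Relation.ReflTransGen.cases_tail hy |>.resolve_left hyv
  obtain rfl : z = x := congrArg Prod.fst <| Finset.card_le_one.mp (hdeg y) _
    (Finset.mem_filter.mpr ⟨hzy, rfl⟩) _ (Finset.mem_filter.mpr ⟨hxy, rfl⟩)
  exact hz

theorem filter_snd_ne_or (h : Reaches R r x) :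
    Reaches (R.filter fun e => e.2 ≠ v) r x ∨ Reaches R v x := by
  induction h with
  | refl => exact Or.inl .refl
  | @tail y z _ hyz ih =>
    by_cases hz : z = v
    · exact Or.inr (hz ▸ .refl)
    · exact ih.imp (·.tail (Finset.mem_filter.mpr ⟨hyz, hz⟩)) (·.tail hyz)

theorem exists_entry (h : Reaches R r v) (hv : v ≠ r) :
    ∃ c, (c, v) ∈ R ∧ Reaches (R.filter fun e => e.2 ≠ v) r c := by
  have key : ∀ x, Reaches R r x → Reaches (R.filter fun e => e.2 ≠ v) r x ∨
      ∃ c, (c, v) ∈ R ∧ Reaches (R.filter fun e => e.2 ≠ v) r c := by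
    intro x hx
    induction hx with
    | refl => exact Or.inl .refl
    | @tail y z _ hyz ih =>
      refine ih.elim (fun hy => ?_) Or.inr
      by_cases hz : z = v
      · exact Or.inr ⟨y, hz ▸ hyz, hy⟩
      · exact Or.inl (hy.tail (Finset.mem_filter.mpr ⟨hyz, hz⟩))
  refine (key v h).resolve_left fun hv' => ?_
  obtain ⟨y, hy⟩ := hv'.exists_mem_of_ne hv
  exact (Finset.mem_filter.mp hy).2 rfl

theorem erase_of_not_reaches_fst {e : α × α} (he : ¬ Reaches R r e.1)
    (h : Reaches R r x) : Reaches (R.erase e) r x := by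
  induction h with
  | refl => exact .refl
  | @tail y z hy hyz ih =>
    refine ih.tail (Finset.mem_erase.mpr ⟨fun hez => he ?_, hyz⟩)
    rwa [← hez]

end Reaches

section Prune

variable {α : Type*} [DecidableEq α] {R : Finset (α × α)} {r : α} {T : Finset α}

theorem exists_erase_reaches_of_not_isDirSteinerTree (hroot : ∀ e ∈ R, e.2 ≠ r)
    (hT : ∀ t ∈ T, Reaches R r t) (hR : ¬ IsDirSteinerTree R r T) :
    ∃ e ∈ R, ∀ x, Reaches R r x → Reaches (R.erase e) r x := by
  by_cases htail : ∀ e ∈ R, Reaches R r e.1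
  swap
  · push Not at htail
    obtain ⟨e, he, hunreach⟩ := htail
    exact ⟨e, he, fun x => Reaches.erase_of_not_reaches_fst hunreach⟩
  have hdeg : ∃ v, 1 < (R.filter fun e => e.2 = v).card := by
    by_contra! hdeg
    exact hR ⟨hroot, hdeg, htail, hT⟩
  obtain ⟨v, hv⟩ := hdeg
  obtain ⟨e₁, he₁, e₂, he₂, hne⟩ := Finset.one_lt_card.mp hv
  obtain ⟨he₁R, rfl⟩ := Finset.mem_filter.mp he₁
  obtain ⟨he₂R, he₂v⟩ := Finset.mem_filter.mp he₂
  obtain ⟨c, hc, hcr⟩ := Reaches.exists_entry ((htail e₁ he₁R).tail he₁R) (hroot e₁ he₁R)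
  -- of two edges into `e₁.2`, one differs from the first-entry edge `(c, e₁.2)`
  have hdrop : ∀ e ∈ R, e.2 = e₁.2 → e ≠ (c, e₁.2) →
      ∀ x, Reaches R r x → Reaches (R.erase e) r x := by
    intro e he hev hec x hx
    have hsub : (R.filter fun e' => e'.2 ≠ e₁.2) ⊆ R.erase e := fun e' he' =>
      have ⟨he'R, he'v⟩ := Finset.mem_filter.mp he'
      Finset.mem_erase.mpr ⟨fun h => he'v (h ▸ hev), he'R⟩
    exact Reaches.map_reroute (φ := id)
      (fun e' he' hne' => hsub (Finset.mem_filter.mpr ⟨he', hne'⟩))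
      ((hcr.mono hsub).tail (Finset.mem_erase.mpr ⟨hec.symm, hc⟩)) hx
  by_cases h₁ : e₁ = (c, e₁.2)
  · exact ⟨e₂, he₂R, hdrop e₂ he₂R he₂v (h₁ ▸ hne).symm⟩
  · exact ⟨e₁, he₁R, hdrop e₁ he₁R rfl h₁⟩

theorem exists_isDirSteinerTree_subset (hroot : ∀ e ∈ R, e.2 ≠ r)
    (hT : ∀ t ∈ T, Reaches R r t) : ∃ R' ⊆ R, IsDirSteinerTree R' r T := by
  induction R using Finset.strongInduction with
  | H R ih =>
    by_cases hR : IsDirSteinerTree R r T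
    · exact ⟨R, subset_rfl, hR⟩
    obtain ⟨e, he, hpres⟩ := exists_erase_reaches_of_not_isDirSteinerTree hroot hT hR
    obtain ⟨R', hR', htree⟩ := ih _ (Finset.erase_ssubset he)
      (fun e' he' => hroot e' (Finset.mem_of_mem_erase he')) (fun t ht => hpres t (hT t ht))
    exact ⟨R', hR'.trans (Finset.erase_subset _ _), htree⟩

end Prune

theorem IsDirSteinerTree.reaches_of_memVerts {α : Type*} [DecidableEq α]
    {R : Finset (α × α)} {r x : α} {T : Finset α} (h : IsDirSteinerTree R r T)
    (hx : MemVerts R x) : Reaches R r x := by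
  obtain ⟨e, he, rfl | rfl⟩ := hx
  · exact h.2.2.1 e he
  · exact (h.2.2.1 e he).tail he

def lowerLayers {V : Type*} (s : ℕ) : AuxV V → AuxV V :=
  Sum.map id (Prod.map id (· - s))

theorem lowerLayers_zero {V : Type*} (x : AuxV V) : lowerLayers 0 x = x := by
  rcases x with _ | ⟨_, _⟩ <;> rfl

theorem auxCost_lowerLayers {V : Type*} (c : V × V → ℕ) (s t : ℕ) (x y : AuxV V) :
    auxCost c (lowerLayers s x, lowerLayers t y) = auxCost c (x, y) := by
  rcases x with _ | ⟨_, _⟩ <;> rcases y with _ | ⟨_, _⟩ <;> rfl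

section AuxiliaryGraph

variable {V : Type*} [DecidableEq V] {E : Finset (V × V)} {d : V × V → ℕ} {S : Finset V}
  {r : V} {D : ℕ}

theorem mem_auxEdges_iff {e : AuxV V × AuxV V} :
    e ∈ auxEdges E d S r D ↔
      (∃ u w k, (u, w) ∈ E ∧ u ≠ r ∧ w ≠ r ∧ 1 ≤ k ∧ k ≤ D ∧ k + d (u, w) ≤ D ∧
        e = (Sum.inr (u, k), Sum.inr (w, k + d (u, w)))) ∨
      (∃ w, (r, w) ∈ E ∧ w ≠ r ∧ d (r, w) ≤ D ∧
        e = (Sum.inl r, Sum.inr (w, d (r, w)))) ∨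
      (∃ w k, w ∈ S ∧ w ≠ r ∧ 1 ≤ k ∧ k ≤ D ∧ e = (Sum.inr (w, k), Sum.inl w)) := by
  simp only [auxEdges, Finset.mem_union, Finset.mem_image, Finset.mem_filter,
    Finset.mem_product, Finset.mem_Icc, Finset.mem_erase]
  constructor
  · rintro ((⟨⟨⟨u, w⟩, k⟩, ⟨⟨⟨he, hu, hw⟩, hk⟩, hkd⟩, rfl⟩ |
      ⟨⟨u, w⟩, ⟨he, rfl, hw, hd⟩, rfl⟩) | ⟨⟨w, k⟩, ⟨⟨hw, hwS⟩, hk⟩, rfl⟩)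
    · exact Or.inl ⟨u, w, k, he, hu, hw, hk.1, hk.2, hkd, rfl⟩
    · exact Or.inr (Or.inl ⟨w, he, hw, hd, rfl⟩)
    · exact Or.inr (Or.inr ⟨w, k, hwS, hw, hk.1, hk.2, rfl⟩)
  · rintro (⟨u, w, k, he, hu, hw, hk1, hk2, hkd, rfl⟩ | ⟨w, he, hw, hd, rfl⟩ |
      ⟨w, k, hwS, hw, hk1, hk2, rfl⟩)
    · exact Or.inl (Or.inl ⟨⟨(u, w), k⟩, ⟨⟨⟨he, hu, hw⟩, hk1, hk2⟩, hkd⟩, rfl⟩)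
    · exact Or.inl (Or.inr ⟨(r, w), ⟨he, rfl, hw, hd⟩, rfl⟩)
    · exact Or.inr ⟨⟨w, k⟩, ⟨⟨hw, hwS⟩, hk1, hk2⟩, rfl⟩

theorem snd_ne_inl_of_mem_auxEdges {e : AuxV V × AuxV V} (he : e ∈ auxEdges E d S r D) :
    e.2 ≠ Sum.inl r := by
  rcases mem_auxEdges_iff.mp he with ⟨-, -, -, -, -, -, -, -, -, rfl⟩ | ⟨-, -, -, -, rfl⟩ |
    ⟨w, -, -, hw, -, -, rfl⟩
  · exact Sum.inr_ne_inl
  · exact Sum.inr_ne_inl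
  · exact fun h => hw (Sum.inl_injective h)

theorem one_le_of_memVerts (hd : ∀ e ∈ E, 0 < d e) {R : Finset (AuxV V × AuxV V)}
    (hR : R ⊆ auxEdges E d S r D) {v : V} {i : ℕ} (h : MemVerts R (Sum.inr (v, i))) :
    1 ≤ i := by
  obtain ⟨e, he, hv⟩ := h
  rcases mem_auxEdges_iff.mp (hR he) with ⟨u, w, k, hE, -, -, hk, -, -, rfl⟩ |
    ⟨w, hE, -, -, rfl⟩ | ⟨w, k, -, -, hk, -, rfl⟩ <;>
    simp only [reduceCtorEq, Sum.inr.injEq, Prod.mk.injEq, false_or, or_false] at hv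
  · rcases hv with ⟨-, rfl⟩ | ⟨-, rfl⟩ <;> omega
  · exact hv.2 ▸ hd _ hE
  · exact hv.2 ▸ hk

theorem auxCost_pos {c : V × V → ℕ} (hc : ∀ e ∈ E, 0 < c e) {x : AuxV V} {w : V × ℕ}
    (he : (x, Sum.inr w) ∈ auxEdges E d S r D) : 0 < auxCost c (x, Sum.inr w) := by
  rcases mem_auxEdges_iff.mp he with ⟨u, w', k, hE, -, -, -, -, -, h⟩ | ⟨w', hE, -, -, h⟩ |
    ⟨w', k, -, -, -, -, h⟩ <;>
    simp only [Prod.mk.injEq, Sum.inr.injEq, reduceCtorEq, and_false] at h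
  · obtain ⟨rfl, rfl⟩ := h
    exact hc _ hE
  · obtain ⟨rfl, rfl⟩ := h
    exact hc _ hE

/-- The extra terminal copies are sinks of `H`, so they count as lying above every layer. -/
def AtOrAboveLayer (r : V) (j : ℕ) : AuxV V → Prop
  | Sum.inl w => w ≠ r
  | Sum.inr (_, k) => j ≤ k

theorem AtOrAboveLayer.of_mem_auxEdges {x y : AuxV V} {j : ℕ}
    (he : (x, y) ∈ auxEdges E d S r D) (hx : AtOrAboveLayer r j x) : AtOrAboveLayer r j y := by
  rcases mem_auxEdges_iff.mp he with ⟨u, w, k, -, -, -, -, -, -, h⟩ | ⟨w, -, -, -, h⟩ |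
    ⟨w, k, -, hw, -, -, h⟩ <;> obtain ⟨rfl, rfl⟩ := Prod.mk.inj h
  · exact Nat.le_add_right_of_le hx
  · exact absurd rfl hx
  · exact hw

theorem AtOrAboveLayer.of_reaches {R : Finset (AuxV V × AuxV V)} (hR : R ⊆ auxEdges E d S r D)
    {x y : AuxV V} {j : ℕ} (h : Reaches R x y) (hx : AtOrAboveLayer r j x) :
    AtOrAboveLayer r j y := by
  induction h with
  | refl => exact hx
  | tail _ hyz ih => exact ih.of_mem_auxEdges (hR hyz)

theorem lowerLayers_mem_auxEdges {x y : AuxV V} {j s : ℕ} (he : (x, y) ∈ auxEdges E d S r D)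
    (hx : AtOrAboveLayer r j x) (hs : s < j) :
    (lowerLayers s x, lowerLayers s y) ∈ auxEdges E d S r D := by
  rcases mem_auxEdges_iff.mp he with ⟨u, w, k, hE, hu, hw, -, hkD, hkd, h⟩ |
    ⟨w, -, -, -, h⟩ | ⟨w, k, hwS, hw, -, hkD, h⟩ <;> obtain ⟨rfl, rfl⟩ := Prod.mk.inj h
  · change j ≤ k at hx
    refine mem_auxEdges_iff.mpr
      (Or.inl ⟨u, w, k - s, hE, hu, hw, by omega, by omega, by omega, ?_⟩)
    simp only [lowerLayers, Sum.map_inr, Prod.map_apply, id]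
    congr 3
    omega
  · exact absurd rfl hx
  · change j ≤ k at hx
    exact mem_auxEdges_iff.mpr (Or.inr (Or.inr ⟨w, k - s, hwS, hw, by omega, by omega, rfl⟩))

end AuxiliaryGraph

section LowerSubtree

variable {V : Type*} {R : Finset (AuxV V × AuxV V)} {b x : AuxV V} {s : ℕ}

open Classical in
noncomputable def lowerSubtree (R : Finset (AuxV V × AuxV V)) (b : AuxV V) (s : ℕ)
    (x : AuxV V) : AuxV V :=
  lowerLayers (if Reaches R b x then s else 0) x

theorem lowerSubtree_of_reaches (h : Reaches R b x) : lowerSubtree R b s x = lowerLayers s x := by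
  simp [lowerSubtree, h]

theorem lowerSubtree_of_not_reaches (h : ¬ Reaches R b x) : lowerSubtree R b s x = x := by
  simp [lowerSubtree, h, lowerLayers_zero]

end LowerSubtree

section Reattach

variable {V : Type*} [DecidableEq V] {E : Finset (V × V)} {d : V × V → ℕ} {S : Finset V}
  {r : V} {D : ℕ} {R : Finset (AuxV V × AuxV V)} {v : V} {i j : ℕ}

/-- `R` with the edge into `v^j` removed and the subtree below `v^j`, lowered by `j - i`
layers, hung below `v^i` instead. -/
noncomputable def reattach (R : Finset (AuxV V × AuxV V)) (v : V) (i j : ℕ) :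
    Finset (AuxV V × AuxV V) :=
  (R.filter fun e => e.2 ≠ Sum.inr (v, j)).image fun e =>
    (lowerSubtree R (Sum.inr (v, j)) (j - i) e.1, lowerSubtree R (Sum.inr (v, j)) (j - i) e.2)

theorem reattach_subset_auxEdges (hR : R ⊆ auxEdges E d S r D)
    (hdeg : ∀ x, (R.filter fun e => e.2 = x).card ≤ 1) (hi : 1 ≤ i) (hij : i < j) :
    reattach R v i j ⊆ auxEdges E d S r D := by
  intro f hf
  obtain ⟨⟨x, y⟩, he, rfl⟩ := Finset.mem_image.mp hf
  obtain ⟨heR, hy⟩ := Finset.mem_filter.mp he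
  by_cases hyb : Reaches R (Sum.inr (v, j)) y
  · have hxb := Reaches.of_mem_of_reaches_snd hdeg heR hyb hy
    rw [lowerSubtree_of_reaches hxb, lowerSubtree_of_reaches hyb]
    exact lowerLayers_mem_auxEdges (hR heR)
      (AtOrAboveLayer.of_reaches hR hxb (le_refl j)) (by omega)
  · have hxb : ¬ Reaches R (Sum.inr (v, j)) x := fun h => hyb (h.tail heR)
    rw [lowerSubtree_of_not_reaches hxb, lowerSubtree_of_not_reaches hyb]
    exact hR heR

theorem treeCost_reattach_lt {c : V × V → ℕ} (hc : ∀ e ∈ E, 0 < c e)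
    (hR : R ⊆ auxEdges E d S r D) {y : AuxV V} (hy : (y, Sum.inr (v, j)) ∈ R) :
    treeCost (auxCost c) (reattach R v i j) < treeCost (auxCost c) R := by
  unfold treeCost reattach
  calc _ ≤ ∑ e ∈ R.filter (fun e => e.2 ≠ Sum.inr (v, j)), auxCost c
          (lowerSubtree R (Sum.inr (v, j)) (j - i) e.1,
            lowerSubtree R (Sum.inr (v, j)) (j - i) e.2) :=
        Finset.sum_image_le_of_nonneg fun _ _ => Nat.zero_le _
    _ = ∑ e ∈ R.filter (fun e => e.2 ≠ Sum.inr (v, j)), auxCost c e :=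
        Finset.sum_congr rfl fun e _ => auxCost_lowerLayers c _ _ e.1 e.2
    _ < ∑ e ∈ R, auxCost c e :=
        Finset.sum_lt_sum_of_subset (Finset.filter_subset _ _) hy (by simp)
          (auxCost_pos hc (hR hy)) fun _ _ _ => Nat.zero_le _

theorem reaches_reattach (hR : R ⊆ auxEdges E d S r D)
    (hi : Reaches R (Sum.inl r) (Sum.inr (v, i))) (hij : i < j) {w : V}
    (hw : Reaches R (Sum.inl r) (Sum.inl w)) :
    Reaches (reattach R v i j) (Sum.inl r) (Sum.inl w) := by
  have hvi : ¬ Reaches R (Sum.inr (v, j)) (Sum.inr (v, i)) := fun h =>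
    absurd (AtOrAboveLayer.of_reaches hR h (le_refl j)) (not_le.mpr hij)
  have hφvi := lowerSubtree_of_not_reaches (s := j - i) hvi
  have hφvj : lowerSubtree R (Sum.inr (v, j)) (j - i) (Sum.inr (v, j)) = Sum.inr (v, i) := by
    rw [lowerSubtree_of_reaches .refl]
    simp only [lowerLayers, Sum.map_inr, Prod.map_apply, id]
    congr 2
    omega
  set φ := lowerSubtree R (Sum.inr (v, j)) (j - i)
  have hφ_inl : ∀ u, φ (Sum.inl u) = Sum.inl u := fun _ => rfl
  have hedge : ∀ e ∈ R, e.2 ≠ Sum.inr (v, j) → (φ e.1, φ e.2) ∈ reattach R v i j :=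
    fun e he hne => Finset.mem_image_of_mem _ (Finset.mem_filter.mpr ⟨he, hne⟩)
  -- `v^i` is not below `v^j`, so a path to it avoids the removed edge and is not moved
  have hvi' : Reaches (reattach R v i j) (φ (Sum.inl r)) (φ (Sum.inr (v, i))) :=
    ((Reaches.filter_snd_ne_or hi).resolve_right hvi).lift
      (p := fun a b => (a, b) ∈ reattach R v i j) φ fun x y hxy =>
      have ⟨hxyR, hne⟩ := Finset.mem_filter.mp hxy
      hedge _ hxyR hne
  rw [hφvi, ← hφvj] at hvi'
  simpa only [hφ_inl] using Reaches.map_reroute hedge hvi' hw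

end Reattach

theorem min_aux_steiner_tree_at_most_one_copy_general
    {V : Type*} [DecidableEq V]
    (E : Finset (V × V)) (S : Finset V) (r : V)
    (c : V × V → ℕ) (d : V × V → ℕ)
    (hc : ∀ e ∈ E, 0 < c e) (hd : ∀ e ∈ E, 0 < d e)
    (D : ℕ)
    (R : Finset (AuxV V × AuxV V))
    (hR : IsMinDirSteinerTree (auxCost c) (auxEdges E d S r D) R
      (Sum.inl r) (auxTerminals S)) :
    ∀ v : V, ∀ i j : ℕ,
      MemVerts R (Sum.inr (v, i)) → MemVerts R (Sum.inr (v, j)) → i = j := by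
  obtain ⟨hRE, htree, hmin⟩ := hR
  suffices hlt : ∀ v i j,
      MemVerts R (Sum.inr (v, i)) → MemVerts R (Sum.inr (v, j)) → ¬ i < j by
    intro v i j hi hj
    exact le_antisymm (not_lt.mp (hlt v j i hj hi)) (not_lt.mp (hlt v i j hi hj))
  intro v i j hi hj hij
  have hsub := reattach_subset_auxEdges (v := v) hRE htree.2.1 (one_le_of_memVerts hd hRE hi) hij
  obtain ⟨R', hR'R, hR'⟩ := exists_isDirSteinerTree_subset (T := auxTerminals S)
    (fun e he => snd_ne_inl_of_mem_auxEdges (hsub he)) fun t ht => by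
      obtain ⟨w, -, rfl⟩ := Finset.mem_image.mp ht
      exact reaches_reattach hRE (htree.reaches_of_memVerts hi) hij (htree.2.2.2 _ ht)
  obtain ⟨y, hy⟩ := (htree.reaches_of_memVerts hj).exists_mem_of_ne Sum.inr_ne_inl
  have hcheaper := treeCost_reattach_lt (i := i) hc hRE hy
  have hmono : treeCost (auxCost c) R' ≤ treeCost (auxCost c) (reattach R v i j) :=
    Finset.sum_le_sum_of_subset hR'R
  exact absurd (hmin R' (hR'R.trans hsub) hR') (by omega)

/-- Lemma 1 of the paper.
In the layered auxiliary graph `H = auxEdges E d S r D` constructed from `G`,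
every minimum-cost directed Steiner tree `R` rooted at `r` spanning the
terminal set `S_H` contains, for each vertex `v` of `G`, at most one vertex
among the layer copies `v^1, …, v^D`. -/
theorem min_aux_steiner_tree_at_most_one_copy
    {V : Type*} [Fintype V] [DecidableEq V]
    (E : Finset (V × V)) (S : Finset V) (r : V) (hr : r ∈ S)
    (c : V × V → ℕ) (d : V × V → ℕ)
    (hc : ∀ e ∈ E, 0 < c e) (hd : ∀ e ∈ E, 0 < d e)
    (D : ℕ) (hD : 0 < D)
    (R : Finset (AuxV V × AuxV V))
    (hR : IsMinDirSteinerTree (auxCost c) (auxEdges E d S r D) R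
      (Sum.inl r) (auxTerminals S)) :
    ∀ v : V, ∀ i j : ℕ,
      MemVerts R (Sum.inr (v, i)) → MemVerts R (Sum.inr (v, j)) → i = j :=
  min_aux_steiner_tree_at_most_one_copy_general E S r c d hc hd D R hR
end

section
/- Let H be the layered auxiliary graph constructed from G with delay bound D (with D copies v^1,…,v^D of each non-root vertex v, edges (v_j^i, v_l^{i+d(e)}) of cost c(e) for each edge e=(v_j,v_l) of G and each feasible layer i, edges (r, v_l^{d(e)}) of cost c(e) for edges incident to r, and an extra terminal copy of each terminal of S∖{r} joined by cost-0 edges from all of its D layer copies), and let S_H be its terminal set. If R is a minimum-cost directed Steiner tree rooted at r spanning S_H in H with total cost C, then the subgraph R' of G consisting of all edges (v_j, v_l) such that some edge (v_j^{i_j}, v_l^{i_l}) belongs to R is a Steiner tree of G spanning S with total cost C, in which the delay of the path from r to every terminal of S is at most D. -/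
/-!
In a minimum-cost tree `R` of the layered graph, no vertex `v` of `G` has two entered copies
`v^i`, `v^j` with `i < j`. Otherwise take such a pair with `j` as large as possible and graft
the subtree hanging from `v^j` onto `v^i`, shifting it down by `j - i` layers. Delays are
positive, so below `v^j` that subtree lies in layers `> j`: the shifted copies stay inside `H`,
and by the maximality of `j` they do not collide with vertices already entered. The
result is again a Steiner tree for `S_H`, and it is cheaper because the (positive-cost) edge
entering `v^j` is dropped. Consequently distinct edges of `R` entering layer copies project to
edges of `G` with distinct heads, so the projection keeps in-degrees at most one and has the
same cost; and a copy `v^i` reached in `R` projects to `v` reached with delay exactly `i`.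
-/

open Sum Relation Finset

section Arborescence

variable {α : Type*} [DecidableEq α] {R : Finset (α × α)} {ρ u : α} {T : Finset α}

lemma forall_card_filter_snd_le_one_iff :
    (∀ v, (R.filter fun e => e.2 = v).card ≤ 1) ↔ ∀ e ∈ R, ∀ f ∈ R, e.2 = f.2 → e = f := by
  refine ⟨fun h e he f hf hef => ?_, fun h v => card_le_one.2 fun e he f hf => ?_⟩
  · exact card_le_one.1 (h e.2) e (mem_filter.2 ⟨he, rfl⟩) f (mem_filter.2 ⟨hf, hef.symm⟩)
  · rw [mem_filter] at he hf
    exact h e he.1 f hf.1 (he.2.trans hf.2.symm)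

lemma IsDirSteinerTree.reaches_snd (hR : IsDirSteinerTree R ρ T) {e : α × α} (he : e ∈ R) :
    Reaches R ρ e.2 :=
  (hR.2.2.1 e he).tail he

lemma IsDirSteinerTree.eq_of_snd_eq (hR : IsDirSteinerTree R ρ T) {e f : α × α}
    (he : e ∈ R) (hf : f ∈ R) (hef : e.2 = f.2) : e = f :=
  forall_card_filter_snd_le_one_iff.1 hR.2.1 e he f hf hef

open Classical in
/-- Re-hangs the subtree of `R` below `u` at `σ u`, moving each of its edges along `σ`. -/
noncomputable def graft (R : Finset (α × α)) (u : α) (σ : α → α) : Finset (α × α) :=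
  R.filter (fun e => ¬ Reaches R u e.2) ∪
    (R.filter fun e => Reaches R u e.1).image (Prod.map σ σ)

variable {σ : α → α}

lemma mem_graft {e : α × α} :
    e ∈ graft R u σ ↔
      (e ∈ R ∧ ¬ Reaches R u e.2) ∨ ∃ f ∈ R, Reaches R u f.1 ∧ Prod.map σ σ f = e := by
  simp [graft, and_assoc]

lemma reaches_graft_of_not_reaches {a x : α} (h : Reaches R a x) (hx : ¬ Reaches R u x) :
    Reaches (graft R u σ) a x := by
  induction h with
  | refl => exact .refl
  | @tail y x _ hyx ih =>
    have hy : ¬ Reaches R u y := fun hy => hx (hy.tail hyx)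
    exact (ih hy).tail (mem_graft.2 (Or.inl ⟨hyx, hx⟩))

lemma reaches_graft_map {x : α} (h : Reaches R u x) : Reaches (graft R u σ) (σ u) (σ x) := by
  induction h with
  | refl => exact .refl
  | @tail y x hy hyx ih => exact ih.tail (mem_graft.2 (Or.inr ⟨(y, x), hyx, hy, rfl⟩))

lemma graft_eq_of_snd_eq (hR : ∀ e ∈ R, ∀ f ∈ R, e.2 = f.2 → e = f)
    (hinj : Set.InjOn σ {x | Reaches R u x})
    (hdisj : ∀ e ∈ R, ∀ f ∈ R, ¬ Reaches R u e.2 → Reaches R u f.1 → σ f.2 ≠ e.2) :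
    ∀ e ∈ graft R u σ, ∀ f ∈ graft R u σ, e.2 = f.2 → e = f := by
  intro e he f hf hef
  rcases mem_graft.1 he with ⟨he, he2⟩ | ⟨e, he', he1, rfl⟩ <;>
    rcases mem_graft.1 hf with ⟨hf, hf2⟩ | ⟨f, hf', hf1, rfl⟩
  · exact hR e he f hf hef
  · exact absurd hef.symm (hdisj e he f hf' he2 hf1)
  · exact absurd hef (hdisj f hf e he' hf2 he1)
  · rw [hR e he' f hf' (hinj (he1.tail he') (hf1.tail hf') hef)]

lemma IsDirSteinerTree.graft (hR : IsDirSteinerTree R ρ T)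
    (hρ : ∀ x, Reaches R u x → σ x ≠ ρ) (hinj : Set.InjOn σ {x | Reaches R u x})
    (hdisj : ∀ e ∈ R, ∀ f ∈ R, ¬ Reaches R u e.2 → Reaches R u f.1 → σ f.2 ≠ e.2)
    (hσu : Reaches R ρ (σ u)) (hσu' : ¬ Reaches R u (σ u))
    (hT : ∀ t ∈ T, Reaches R u t → σ t = t) :
    IsDirSteinerTree (_root_.graft R u σ) ρ T := by
  have hmap : ∀ x, Reaches R u x → Reaches (_root_.graft R u σ) ρ (σ x) := fun x hx =>
    (reaches_graft_of_not_reaches hσu hσu').trans (reaches_graft_map hx)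
  refine ⟨fun e he => ?_, forall_card_filter_snd_le_one_iff.2
    (graft_eq_of_snd_eq (forall_card_filter_snd_le_one_iff.1 hR.2.1) hinj hdisj),
    fun e he => ?_, fun t ht => ?_⟩
  · rcases mem_graft.1 he with ⟨he, -⟩ | ⟨f, hf, hf1, rfl⟩
    · exact hR.1 e he
    · exact hρ _ (hf1.tail hf)
  · rcases mem_graft.1 he with ⟨he, he2⟩ | ⟨f, hf, hf1, rfl⟩
    · exact reaches_graft_of_not_reaches (hR.2.2.1 e he) fun h => he2 (h.tail he)
    · exact hmap _ hf1
  · by_cases h : Reaches R u t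
    · rw [← hT t ht h]
      exact hmap t h
    · exact reaches_graft_of_not_reaches (hR.2.2.2 t ht) h

open Classical in
lemma treeCost_graft_lt {c : α × α → ℕ} (hσc : ∀ e, c (Prod.map σ σ e) = c e) {e₀ : α × α}
    (he₀ : e₀ ∈ R) (he₀u : ¬ Reaches R u e₀.1) (hue₀ : Reaches R u e₀.2) (hc : 0 < c e₀) :
    treeCost c (graft R u σ) < treeCost c R := by
  set A := R.filter fun e => ¬ Reaches R u e.2
  set B := R.filter fun e => Reaches R u e.1
  calc treeCost c (graft R u σ) ≤ ∑ e ∈ A, c e + ∑ e ∈ B.image (Prod.map σ σ), c e := by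
        unfold treeCost graft
        exact (Nat.le_add_right _ _).trans_eq sum_union_inter
    _ ≤ ∑ e ∈ A, c e + ∑ e ∈ B, c e := by
        refine Nat.add_le_add_left ?_ _
        exact (sum_image_le_of_nonneg fun _ _ => Nat.zero_le _).trans_eq
          (sum_congr rfl fun e _ => hσc e)
    _ < ∑ e ∈ A, c e + ∑ e ∈ R.filter (fun e => Reaches R u e.2), c e := by
        gcongr
        refine sum_lt_sum_of_subset (fun e he => ?_) (mem_filter.2 ⟨he₀, hue₀⟩)
          (fun h => he₀u (mem_filter.1 h).2) hc fun _ _ _ => Nat.zero_le _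
        rw [mem_filter] at he ⊢
        exact ⟨he.1, he.2.tail he.1⟩
    _ = treeCost c R := sum_filter_not_add_sum_filter R _ c

end Arborescence

section AuxMaps

variable {V : Type*}

def auxProj : AuxV V → V := Sum.elim id Prod.fst

def shiftDown (s : ℕ) : AuxV V → AuxV V := Sum.map id (Prod.map id (· - s))

@[simp] lemma shiftDown_inl (s : ℕ) (a : V) : shiftDown s (inl a) = inl a := rfl

@[simp] lemma shiftDown_inr (s : ℕ) (a : V) (p : ℕ) :
    shiftDown s (inr (a, p)) = inr (a, p - s) := rfl

lemma auxCost_map_shiftDown (c : V × V → ℕ) (s : ℕ) (e : AuxV V × AuxV V) :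
    auxCost c (Prod.map (shiftDown s) (shiftDown s) e) = auxCost c e := by
  rcases e with ⟨_ | _, _ | _⟩ <;> rfl

lemma auxCost_of_snd_eq_inr (c : V × V → ℕ) {e : AuxV V × AuxV V} {b : V} {q : ℕ}
    (h : e.2 = inr (b, q)) : auxCost c e = c (auxProj e.1, b) := by
  rcases e with ⟨_ | _, _ | _⟩ <;> cases h <;> rfl

def projEdge : AuxV V × AuxV V → Finset (V × V)
  | (inr (a, _), inr (b, _)) => {(a, b)}
  | (inl a, inr (b, _)) => {(a, b)}
  | _ => ∅

lemma mem_projEdge {x : V × V} {e : AuxV V × AuxV V} :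
    x ∈ projEdge e ↔ ∃ q, e.2 = inr (x.2, q) ∧ auxProj e.1 = x.1 := by
  rcases e with ⟨_ | ⟨_, _⟩, _ | ⟨_, _⟩⟩ <;>
    simp [projEdge, auxProj, Prod.ext_iff, and_comm, eq_comm]

lemma sum_projEdge (c : V × V → ℕ) (e : AuxV V × AuxV V) :
    ∑ x ∈ projEdge e, c x = auxCost c e := by
  rcases e with ⟨_ | ⟨_, _⟩, _ | ⟨_, _⟩⟩ <;> simp [projEdge, auxCost]

end AuxMaps

section AuxGraph

variable {V : Type*} [DecidableEq V] {E : Finset (V × V)} {S : Finset V} {r : V}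
  {c d : V × V → ℕ} {D : ℕ} {R : Finset (AuxV V × AuxV V)}

lemma mem_auxEdges {e : AuxV V × AuxV V} :
    e ∈ auxEdges E d S r D ↔
      (∃ a b p, (a, b) ∈ E ∧ a ≠ r ∧ b ≠ r ∧ 1 ≤ p ∧ p + d (a, b) ≤ D ∧
        e = (inr (a, p), inr (b, p + d (a, b)))) ∨
      (∃ b, (r, b) ∈ E ∧ b ≠ r ∧ d (r, b) ≤ D ∧ e = (inl r, inr (b, d (r, b)))) ∨
      (∃ a p, a ∈ S ∧ a ≠ r ∧ 1 ≤ p ∧ p ≤ D ∧ e = (inr (a, p), inl a)) := by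
  simp only [auxEdges, mem_union, mem_image, mem_filter, mem_product, mem_Icc, mem_erase,
    Prod.exists]
  constructor
  · rintro ((⟨a, b, p, ⟨⟨⟨hE, ha, hb⟩, hp, -⟩, hpD⟩, rfl⟩ | ⟨a, b, ⟨hE, rfl, hb, hD⟩, rfl⟩) |
      ⟨a, p, ⟨⟨har, haS⟩, hp, hpD⟩, rfl⟩)
    · exact .inl ⟨a, b, p, hE, ha, hb, hp, hpD, rfl⟩
    · exact .inr (.inl ⟨b, hE, hb, hD, rfl⟩)
    · exact .inr (.inr ⟨a, p, haS, har, hp, hpD, rfl⟩)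
  · rintro (⟨a, b, p, hE, ha, hb, hp, hpD, rfl⟩ | ⟨b, hE, hb, hD, rfl⟩ |
      ⟨a, p, haS, har, hp, hpD, rfl⟩)
    · exact .inl (.inl ⟨a, b, p, ⟨⟨⟨hE, ha, hb⟩, hp, by omega⟩, hpD⟩, rfl⟩)
    · exact .inl (.inr ⟨r, b, ⟨hE, rfl, hb, hD⟩, rfl⟩)
    · exact .inr ⟨a, p, ⟨⟨har, haS⟩, hp, hpD⟩, rfl⟩

lemma auxEdges_snd_eq_inr {e : AuxV V × AuxV V} (he : e ∈ auxEdges E d S r D) {b : V} {q : ℕ}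
    (h : e.2 = inr (b, q)) : (auxProj e.1, b) ∈ E ∧ b ≠ r ∧ q ≤ D := by
  rcases mem_auxEdges.1 he with ⟨a, b', p, hE, -, hb, -, hpD, rfl⟩ | ⟨b', hE, hb, hD, rfl⟩ |
    ⟨a, p, -, -, -, -, rfl⟩ <;> cases h
  · exact ⟨hE, hb, hpD⟩
  · exact ⟨hE, hb, hD⟩

lemma auxEdges_layer_lt (hd : ∀ e ∈ E, 0 < d e) {e : AuxV V × AuxV V}
    (he : e ∈ auxEdges E d S r D) {a b : V} {p q : ℕ} (h₁ : e.1 = inr (a, p))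
    (h₂ : e.2 = inr (b, q)) : p < q := by
  rcases mem_auxEdges.1 he with ⟨a', b', p', hE, -, -, -, -, rfl⟩ | ⟨b', -, -, -, rfl⟩ |
    ⟨a', p', -, -, -, -, rfl⟩ <;> cases h₁ <;> cases h₂
  have := hd _ hE
  omega

lemma auxEdges_layer_pos (hd : ∀ e ∈ E, 0 < d e) {e : AuxV V × AuxV V}
    (he : e ∈ auxEdges E d S r D) {b : V} {q : ℕ} (h : e.2 = inr (b, q)) : 0 < q := by
  rcases mem_auxEdges.1 he with ⟨_, _, _, hE, -, -, hp, -, rfl⟩ | ⟨_, hE, -, -, rfl⟩ |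
    ⟨_, _, -, -, -, -, rfl⟩ <;> cases h
  · omega
  · exact hd _ hE

lemma reaches_inr_cases (hsub : R ⊆ auxEdges E d S r D) {v : V} {j : ℕ} {x : AuxV V}
    (h : Reaches R (inr (v, j)) x) :
    (∃ b q, x = inr (b, q) ∧ j ≤ q) ∨ ∃ t, x = inl t ∧ t ≠ r := by
  induction h with
  | refl => exact .inl ⟨v, j, rfl, le_rfl⟩
  | tail _ hyx ih =>
    rcases mem_auxEdges.1 (hsub hyx) with ⟨a, b, p, -, -, -, -, -, he⟩ | ⟨b, -, -, -, he⟩ |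
      ⟨a, p, -, har, -, -, he⟩ <;> cases he
    · rcases ih with ⟨b', q, h, hq⟩ | ⟨t, h, -⟩ <;> cases h
      exact .inl ⟨b, _, rfl, by omega⟩
    · rcases ih with ⟨b', q, h, -⟩ | ⟨t, h, htr⟩ <;> cases h
      exact absurd rfl htr
    · exact .inr ⟨a, rfl, har⟩

lemma exists_fst_eq_inr_of_reaches (hsub : R ⊆ auxEdges E d S r D) {e : AuxV V × AuxV V}
    (he : e ∈ R) {v : V} {j : ℕ} (h : Reaches R (inr (v, j)) e.1) :
    ∃ a p, e.1 = inr (a, p) ∧ j ≤ p := by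
  rcases reaches_inr_cases hsub h with ⟨a, p, h, hp⟩ | ⟨t, ht, htr⟩
  · exact ⟨a, p, h, hp⟩
  · rcases mem_auxEdges.1 (hsub he) with ⟨_, _, _, -, -, -, -, -, rfl⟩ | ⟨_, -, -, -, rfl⟩ |
      ⟨_, _, -, -, -, -, rfl⟩ <;> cases ht
    exact absurd rfl htr

lemma lt_of_reaches_inr_fst (hd : ∀ e ∈ E, 0 < d e) (hsub : R ⊆ auxEdges E d S r D)
    {e : AuxV V × AuxV V} (he : e ∈ R) {v b : V} {j q : ℕ} (h : Reaches R (inr (v, j)) e.1)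
    (h₂ : e.2 = inr (b, q)) : j < q := by
  obtain ⟨a, p, h₁, hp⟩ := exists_fst_eq_inr_of_reaches hsub he h
  have := auxEdges_layer_lt hd (hsub he) h₁ h₂
  omega

lemma shiftDown_ne_inl (hsub : R ⊆ auxEdges E d S r D) {v : V} {j s : ℕ} {x : AuxV V}
    (h : Reaches R (inr (v, j)) x) : shiftDown s x ≠ inl r := by
  rcases reaches_inr_cases hsub h with ⟨b, q, rfl, -⟩ | ⟨t, rfl, htr⟩
  · simp
  · simpa using htr

lemma injOn_shiftDown (hsub : R ⊆ auxEdges E d S r D) {v : V} {j s : ℕ} (hs : s ≤ j) :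
    Set.InjOn (shiftDown s) {x | Reaches R (inr (v, j)) x} := by
  intro x hx y hy hxy
  rcases reaches_inr_cases hsub hx with ⟨b, q, rfl, hq⟩ | ⟨t, rfl, -⟩ <;>
    rcases reaches_inr_cases hsub hy with ⟨b', q', rfl, hq'⟩ | ⟨t', rfl, -⟩ <;>
    simp only [shiftDown_inr, shiftDown_inl, inr.injEq, inl.injEq, Prod.mk.injEq,
      reduceCtorEq] at hxy ⊢
  · exact ⟨hxy.1, by omega⟩
  · exact hxy

lemma map_shiftDown_mem_auxEdges {e : AuxV V × AuxV V} (he : e ∈ auxEdges E d S r D)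
    {a : V} {p s : ℕ} (h₁ : e.1 = inr (a, p)) (hs : s < p) :
    Prod.map (shiftDown s) (shiftDown s) e ∈ auxEdges E d S r D := by
  rcases mem_auxEdges.1 he with ⟨a, b, p, hE, ha, hb, -, hpD, rfl⟩ | ⟨b, -, -, -, rfl⟩ |
    ⟨a, p, haS, har, -, hpD, rfl⟩ <;> cases h₁
  · refine mem_auxEdges.2 (.inl ⟨a, b, p - s, hE, ha, hb, by omega, by omega, ?_⟩)
    simp only [Prod.map, shiftDown_inr, Prod.mk.injEq, inr.injEq, true_and]
    omega
  · exact mem_auxEdges.2 (.inr (.inr ⟨a, p - s, haS, har, by omega, by omega, rfl⟩))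

end AuxGraph

section Exchange

variable {V : Type*} [DecidableEq V] {E : Finset (V × V)} {S : Finset V} {r : V}
  {c d : V × V → ℕ} {D : ℕ} {R : Finset (AuxV V × AuxV V)}

lemma exists_cheaper_of_two_entered_copies (hc : ∀ e ∈ E, 0 < c e) (hd : ∀ e ∈ E, 0 < d e)
    (hsub : R ⊆ auxEdges E d S r D) (hR : IsDirSteinerTree R (inl r) (auxTerminals S))
    {v : V} {i j : ℕ} (hij : i < j) (hi : inr (v, i) ∈ R.image Prod.snd)
    (hj : inr (v, j) ∈ R.image Prod.snd)
    (hmax : ∀ b p q, p < q → inr (b, p) ∈ R.image Prod.snd → inr (b, q) ∈ R.image Prod.snd →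
      q ≤ j) :
    ∃ R' ⊆ auxEdges E d S r D, IsDirSteinerTree R' (inl r) (auxTerminals S) ∧
      treeCost (auxCost c) R' < treeCost (auxCost c) R := by
  obtain ⟨e₀, he₀, he₀₂⟩ := mem_image.1 hj
  obtain ⟨e₁, he₁, he₁₂⟩ := mem_image.1 hi
  have hσu : shiftDown (j - i) (inr (v, j)) = inr (v, i) := by
    rw [shiftDown_inr, Nat.sub_sub_self hij.le]
  have hdisj : ∀ e ∈ R, ∀ f ∈ R, ¬ Reaches R (inr (v, j)) e.2 → Reaches R (inr (v, j)) f.1 →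
      shiftDown (j - i) f.2 ≠ e.2 := by
    intro e he f hf he₂ hf₁ hfe
    have hf₂ : Reaches R (inr (v, j)) f.2 := hf₁.tail hf
    rcases reaches_inr_cases hsub hf₂ with ⟨b, q, hfq, -⟩ | ⟨t, hft, -⟩
    -- `e` and `f` would enter two copies of `b`, the upper one in a layer `q > j`
    · have hjq := lt_of_reaches_inr_fst hd hsub hf hf₁ hfq
      rw [hfq, shiftDown_inr] at hfe
      have := hmax b (q - (j - i)) q (by omega) (mem_image.2 ⟨e, he, hfe.symm⟩)
        (mem_image.2 ⟨f, hf, hfq⟩)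
      omega
    · rw [hft, shiftDown_inl] at hfe
      exact he₂ (hfe ▸ hft ▸ hf₂)
  refine ⟨graft R (inr (v, j)) (shiftDown (j - i)), fun e he => ?_,
    hR.graft (fun _ => shiftDown_ne_inl hsub) (injOn_shiftDown hsub (Nat.sub_le j i)) hdisj
      ?_ ?_ ?_,
    treeCost_graft_lt (auxCost_map_shiftDown c _) he₀ ?_ (he₀₂ ▸ .refl) ?_⟩
  · rcases mem_graft.1 he with ⟨he, -⟩ | ⟨f, hf, hf₁, rfl⟩
    · exact hsub he
    · obtain ⟨a, p, hf₁', hp⟩ := exists_fst_eq_inr_of_reaches hsub hf hf₁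
      have := auxEdges_layer_pos hd (hsub he₁) he₁₂
      exact map_shiftDown_mem_auxEdges (hsub hf) hf₁' (by omega)
  · rw [hσu, ← he₁₂]
    exact hR.reaches_snd he₁
  · rw [hσu]
    intro h
    rcases reaches_inr_cases hsub h with ⟨b, q, h, hq⟩ | ⟨t, h, -⟩ <;> cases h
    omega
  · intro t ht _
    obtain ⟨t', -, rfl⟩ := mem_image.1 ht
    rfl
  · exact fun h => (lt_of_reaches_inr_fst hd hsub he₀ h he₀₂).false
  · rw [auxCost_of_snd_eq_inr c he₀₂]
    exact hc _ (auxEdges_snd_eq_inr (hsub he₀) he₀₂).1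

lemma IsMinDirSteinerTree.eq_of_snd_eq_inr (hc : ∀ e ∈ E, 0 < c e) (hd : ∀ e ∈ E, 0 < d e)
    (hR : IsMinDirSteinerTree (auxCost c) (auxEdges E d S r D) R (inl r) (auxTerminals S)) :
    ∀ e ∈ R, ∀ f ∈ R, ∀ {b : V} {p q : ℕ}, e.2 = inr (b, p) → f.2 = inr (b, q) → e = f := by
  classical
  obtain ⟨hsub, htree, hmin⟩ := hR
  suffices hlayer : ∀ b p q, p < q → inr (b, p) ∈ R.image Prod.snd →
      inr (b, q) ∉ R.image Prod.snd by
    intro e he f hf b p q he₂ hf₂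
    refine htree.eq_of_snd_eq he hf ?_
    have hp := mem_image.2 ⟨e, he, he₂⟩
    have hq := mem_image.2 ⟨f, hf, hf₂⟩
    rcases lt_trichotomy p q with h | rfl | h
    · exact absurd hq (hlayer b p q h hp)
    · rw [he₂, hf₂]
    · exact absurd hp (hlayer b q p h hq)
  intro b p q hpq hp hq
  let TwoCopies (j : ℕ) : Prop :=
    ∃ v i, i < j ∧ inr (v, i) ∈ R.image Prod.snd ∧ inr (v, j) ∈ R.image Prod.snd
  have hbound : ∀ j, TwoCopies j → j ≤ D := by
    rintro j ⟨v, i, -, -, hj⟩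
    obtain ⟨e, he, he₂⟩ := mem_image.1 hj
    exact (auxEdges_snd_eq_inr (hsub he) he₂).2.2
  have hTq : TwoCopies q := ⟨b, p, hpq, hp, hq⟩
  obtain ⟨v, i, hij, hi, hj⟩ := Nat.findGreatest_spec (hbound q hTq) hTq
  obtain ⟨R', hR'sub, hR', hlt⟩ := exists_cheaper_of_two_entered_copies hc hd hsub htree hij hi hj
    fun b p q hpq hp hq => Nat.le_findGreatest (hbound q ⟨b, p, hpq, hp, hq⟩) ⟨b, p, hpq, hp, hq⟩
  exact (hmin R' hR'sub hR').not_gt hlt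

end Exchange

section Projection

variable {V : Type*} [DecidableEq V] {E : Finset (V × V)} {S : Finset V} {r : V}
  {c d : V × V → ℕ} {D : ℕ} {R : Finset (AuxV V × AuxV V)}

lemma projTree_eq_biUnion : projTree R = R.biUnion projEdge := rfl

lemma mem_projTree {x : V × V} :
    x ∈ projTree R ↔ ∃ e ∈ R, ∃ q, e.2 = inr (x.2, q) ∧ auxProj e.1 = x.1 := by
  simp only [projTree_eq_biUnion, mem_biUnion, mem_projEdge]

lemma projTree_subset (hsub : R ⊆ auxEdges E d S r D) : projTree R ⊆ E := by
  intro x hx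
  obtain ⟨e, he, q, he₂, he₁⟩ := mem_projTree.1 hx
  simpa [he₁] using (auxEdges_snd_eq_inr (hsub he) he₂).1

lemma reaches_projTree (hsub : R ⊆ auxEdges E d S r D) {x y : AuxV V} (h : Reaches R x y) :
    Reaches (projTree R) (auxProj x) (auxProj y) := by
  refine ReflTransGen.lift' auxProj (fun x y hxy => ?_) x y h
  rcases mem_auxEdges.1 (hsub hxy) with ⟨a, b, p, -, -, -, -, -, he⟩ | ⟨b, -, -, -, he⟩ |
    ⟨a, p, -, -, -, -, he⟩ <;> cases he
  · exact .single (mem_projTree.2 ⟨_, hxy, _, rfl, rfl⟩)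
  · exact .single (mem_projTree.2 ⟨_, hxy, _, rfl, rfl⟩)
  · exact .refl

lemma delayReaches_projTree (hsub : R ⊆ auxEdges E d S r D) {b : V} {p : ℕ}
    (h : Reaches R (inl r) (inr (b, p))) : DelayReaches (projTree R) d r b p := by
  generalize hx : (inr (b, p) : AuxV V) = x at h
  induction h generalizing b p with
  | refl => cases hx
  | tail _ hyx ih =>
    subst hx
    rcases mem_auxEdges.1 (hsub hyx) with ⟨a, b, p, -, -, -, -, -, he⟩ | ⟨b, -, -, -, he⟩ |
      ⟨a, p, -, -, -, -, he⟩ <;> cases he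
    · exact (ih rfl).tail ⟨mem_projTree.2 ⟨_, hyx, _, rfl, rfl⟩, rfl⟩
    · exact .single ⟨mem_projTree.2 ⟨_, hyx, _, rfl, rfl⟩, (zero_add _).symm⟩

lemma exists_delayReaches_le (hsub : R ⊆ auxEdges E d S r D)
    (hR : IsDirSteinerTree R (inl r) (auxTerminals S)) :
    ∀ t ∈ S, ∃ k ≤ D, DelayReaches (projTree R) d r t k := by
  intro t ht
  by_cases htr : t = r
  · exact ⟨0, Nat.zero_le _, htr ▸ .refl⟩
  rcases (hR.2.2.2 _ (mem_image_of_mem inl ht)).cases_tail with h | ⟨y, hy, hyt⟩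
  · exact absurd (inl_injective h) htr
  rcases mem_auxEdges.1 (hsub hyt) with ⟨_, _, _, -, -, -, -, -, he⟩ | ⟨_, -, -, -, he⟩ |
    ⟨a, p, -, -, -, hpD, he⟩ <;> cases he
  exact ⟨p, hpD, delayReaches_projTree hsub hy⟩

variable
  (huniq : ∀ e ∈ R, ∀ f ∈ R, ∀ {b : V} {p q : ℕ}, e.2 = inr (b, p) → f.2 = inr (b, q) → e = f)
include huniq

lemma projTree_eq_of_snd_eq :
    ∀ x ∈ projTree R, ∀ y ∈ projTree R, x.2 = y.2 → x = y := by
  intro x hx y hy hxy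
  obtain ⟨e, he, p, he₂, he₁⟩ := mem_projTree.1 hx
  obtain ⟨f, hf, q, hf₂, hf₁⟩ := mem_projTree.1 hy
  obtain rfl := huniq e he f hf he₂ (hxy ▸ hf₂)
  exact Prod.ext (he₁.symm.trans hf₁) hxy

lemma IsDirSteinerTree.projTree (hsub : R ⊆ auxEdges E d S r D)
    (hR : IsDirSteinerTree R (inl r) (auxTerminals S)) : IsDirSteinerTree (projTree R) r S := by
  refine ⟨fun x hx => ?_, forall_card_filter_snd_le_one_iff.2 (projTree_eq_of_snd_eq huniq),
    fun x hx => ?_, fun t ht => reaches_projTree hsub (hR.2.2.2 _ (mem_image_of_mem inl ht))⟩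
  · obtain ⟨e, he, q, he₂, -⟩ := mem_projTree.1 hx
    exact (auxEdges_snd_eq_inr (hsub he) he₂).2.1
  · obtain ⟨e, he, q, -, he₁⟩ := mem_projTree.1 hx
    exact he₁ ▸ reaches_projTree hsub (hR.2.2.1 e he)

lemma treeCost_projTree : treeCost c (projTree R) = treeCost (auxCost c) R := by
  rw [treeCost, projTree_eq_biUnion, sum_biUnion]
  · exact sum_congr rfl fun e _ => sum_projEdge c e
  intro e he f hf hef
  refine disjoint_left.2 fun x hxe hxf => hef ?_
  obtain ⟨p, he₂, -⟩ := mem_projEdge.1 hxe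
  obtain ⟨q, hf₂, -⟩ := mem_projEdge.1 hxf
  exact huniq e he f hf he₂ hf₂

end Projection

theorem min_aux_steiner_tree_projects_general
    {V : Type*} [DecidableEq V]
    (E : Finset (V × V)) (S : Finset V) (r : V)
    (c : V × V → ℕ) (d : V × V → ℕ)
    (hc : ∀ e ∈ E, 0 < c e) (hd : ∀ e ∈ E, 0 < d e)
    (D : ℕ)
    (R : Finset (AuxV V × AuxV V)) (C : ℕ)
    (hR : IsMinDirSteinerTree (auxCost c) (auxEdges E d S r D) R
      (Sum.inl r) (auxTerminals S))
    (hC : treeCost (auxCost c) R = C) :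
    projTree R ⊆ E ∧
    IsDirSteinerTree (projTree R) r S ∧
    treeCost c (projTree R) = C ∧
    ∀ t ∈ S, ∃ k ≤ D, DelayReaches (projTree R) d r t k := by
  have huniq := hR.eq_of_snd_eq_inr hc hd
  obtain ⟨hsub, htree, -⟩ := hR
  exact ⟨projTree_subset hsub, htree.projTree huniq hsub, (treeCost_projTree huniq).trans hC,
    exists_delayReaches_le hsub htree⟩

/-- first direction of Theorem 2 of the paper.
If `R` is a minimum-cost directed Steiner tree rooted at `r` spanning `S_H`
in the layered auxiliary graph `H`, with total cost `C`, then the subgraph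
`R'` of `G` consisting of all edges `(v_j, v_l)` some copy of which belongs
to `R` (i.e. `projTree R`) is a Steiner tree of `G` spanning `S`, rooted at
`r`, of the same total cost `C`, in which the delay of the tree path from
`r` to every terminal of `S` is at most `D`. -/
theorem min_aux_steiner_tree_projects
    {V : Type*} [Fintype V] [DecidableEq V]
    (E : Finset (V × V)) (S : Finset V) (r : V) (hr : r ∈ S)
    (c : V × V → ℕ) (d : V × V → ℕ)
    (hc : ∀ e ∈ E, 0 < c e) (hd : ∀ e ∈ E, 0 < d e)
    (D : ℕ) (hD : 0 < D)
    (R : Finset (AuxV V × AuxV V)) (C : ℕ)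
    (hR : IsMinDirSteinerTree (auxCost c) (auxEdges E d S r D) R
      (Sum.inl r) (auxTerminals S))
    (hC : treeCost (auxCost c) R = C) :
    projTree R ⊆ E ∧
    IsDirSteinerTree (projTree R) r S ∧
    treeCost c (projTree R) = C ∧
    ∀ t ∈ S, ∃ k ≤ D, DelayReaches (projTree R) d r t k :=
  min_aux_steiner_tree_projects_general E S r c d hc hd D R C hR hC
end

section
/- Let n and D be positive integers, let ε > 0 be a real number, and let d : P → ℤ≥1 assign a positive integer delay to each element of a finite set P with |P| ≤ n. If ∑_{e∈P} ⌊n·d(e)/(ε·D)⌋ ≤ ⌊n/ε⌋, then ∑_{e∈P} d(e) < (1+ε)·D. -/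
open Finset

/-! Since `x < ⌊x⌋ + 1`, summing over the `|P| ≤ n` edges gives
`n·∑ d(e)/(ε·D) < ⌊n/ε⌋ + |P| ≤ n/ε + n`, and multiplying by `ε·D/n` yields `∑ d(e) < (1 + ε)·D`. -/

section FloorSum

variable {ι K : Type*} [Ring K] [LinearOrder K] [IsStrictOrderedRing K] [FloorRing K]
  {s : Finset ι}

theorem Finset.sum_lt_sum_floor_add_card (hs : s.Nonempty) (f : ι → K) :
    ∑ i ∈ s, f i < ∑ i ∈ s, (⌊f i⌋ : K) + #s :=
  calc ∑ i ∈ s, f i < ∑ i ∈ s, ((⌊f i⌋ : K) + 1) :=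
        sum_lt_sum_of_nonempty hs fun i _ => Int.lt_floor_add_one (f i)
    _ = ∑ i ∈ s, (⌊f i⌋ : K) + #s := by rw [sum_add_distrib, sum_const, nsmul_one]

theorem Finset.sum_lt_add_card_of_sum_floor_le_floor (hs : s.Nonempty) {f : ι → K} {B : K}
    (h : ∑ i ∈ s, ⌊f i⌋ ≤ ⌊B⌋) : ∑ i ∈ s, f i < B + #s :=
  calc ∑ i ∈ s, f i < ∑ i ∈ s, (⌊f i⌋ : K) + #s := sum_lt_sum_floor_add_card hs f
    _ = ((∑ i ∈ s, ⌊f i⌋ : ℤ) : K) + #s := by push_cast; rfl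
    _ ≤ B + #s := by
        gcongr
        exact (Int.cast_le.mpr h).trans (Int.floor_le B)

end FloorSum

theorem scaled_delay_bound_implies_delay_bound_general
    (n D : ℕ) (hD : 0 < D) (ε : ℝ) (hε : 0 < ε)
    (P : Type*) [Fintype P] (d : P → ℕ)
    (hcard : Fintype.card P ≤ n)
    (h : ∑ e : P, ⌊((n : ℝ) * (d e : ℝ)) / (ε * (D : ℝ))⌋ ≤ ⌊(n : ℝ) / ε⌋) :
    ((∑ e : P, d e : ℕ) : ℝ) < (1 + ε) * (D : ℝ) := by
  rcases isEmpty_or_nonempty P with hP | hP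
  · simp only [univ_eq_empty, sum_empty, Nat.cast_zero]
    positivity
  set S : ℝ := ((∑ e : P, d e : ℕ) : ℝ)
  have hεD : 0 < ε * D := by positivity
  have hscaled : (n : ℝ) * S / (ε * D) < n / ε + n := by
    have key := sum_lt_add_card_of_sum_floor_le_floor univ_nonempty h
    rw [← sum_div, ← mul_sum, card_univ] at key
    have hcard' : (Fintype.card P : ℝ) ≤ n := by exact_mod_cast hcard
    simp only [S, Nat.cast_sum]
    linarith
  have hrhs : ((n : ℝ) / ε + n) * (ε * D) = n * ((1 + ε) * D) := by field_simp
  rw [div_lt_iff₀ hεD, hrhs] at hscaled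
  exact lt_of_mul_lt_mul_left hscaled (Nat.cast_nonneg n)

/-- Inequalities (1)–(3) in the proof of Theorem 4.
Let `n` and `D` be positive integers, `ε > 0` a real number, and let
`d : P → ℕ` assign a positive integer delay to each element of a finite set
`P` with `|P| ≤ n`.  If `∑_{e ∈ P} ⌊n·d(e)/(ε·D)⌋ ≤ ⌊n/ε⌋`, then
`∑_{e ∈ P} d(e) < (1+ε)·D`. -/
theorem scaled_delay_bound_implies_delay_bound
    (n D : ℕ) (hn : 0 < n) (hD : 0 < D) (ε : ℝ) (hε : 0 < ε)
    (P : Type*) [Fintype P] (d : P → ℕ) (hd : ∀ e : P, 1 ≤ d e)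
    (hcard : Fintype.card P ≤ n)
    (h : ∑ e : P, ⌊((n : ℝ) * (d e : ℝ)) / (ε * (D : ℝ))⌋ ≤ ⌊(n : ℝ) / ε⌋) :
    ((∑ e : P, d e : ℕ) : ℝ) < (1 + ε) * (D : ℝ) :=
  scaled_delay_bound_implies_delay_bound_general n D hD ε hε P d hcard h
end
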